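/- arXiv:2307.07580 — 4 statements merged into one kernel-verified Lean document; each statement's English description precedes it below -/
import Mathlib

section
/- For every u ∈ ℝ^n and integer N with 1 ≤ N ≤ n, the sum-largest function admits the linear-programming representation ψ(u, N) = min_{λ ∈ ℝ} ( N λ + Σ_{i=1}^n max(u_i − λ, 0) ), and the minimum is attained (in particular at λ equal to the N-th largest entry of u). -/
/-!
For every `λ` and every entry `x`, `x ≤ λ + max (x - λ) 0`; summing over the `N` largest
entries and adding the nonnegative terms of the remaining ones gives
`ψ(u, N) ≤ Nλ + Σ_i max (u_i - λ) 0`. When `λ` is the `N`-th largest entry, the `N` largest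
entries are `≥ λ` and the others `≤ λ`, so both inequalities are equalities.
-/

/-- The sum-largest function `ψ(u, N)`: the sum of the `N` largest entries of `u`,
i.e., the sum of the first `N` entries of `u` sorted in nonincreasing order. -/
noncomputable def sumLargest {n : ℕ} (u : Fin n → ℝ) (N : ℕ) : ℝ :=
  (((List.ofFn u).insertionSort (· ≥ ·)).take N).sum

/-- The `N`-th largest entry of `u` (1-indexed): entry `N-1` of `u` sorted
in nonincreasing order. -/
noncomputable def nthLargest {n : ℕ} (u : Fin n → ℝ) (N : ℕ) : ℝ :=
  ((List.ofFn u).insertionSort (· ≥ ·)).getD (N - 1) 0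

namespace List

theorem sum_take_le_mul_add_sum_max_sub (l : List ℝ) {N : ℕ} (hN : N ≤ l.length) (lam : ℝ) :
    (l.take N).sum ≤ N * lam + (l.map fun x => max (x - lam) 0).sum := by
  induction l generalizing N with
  | nil => simp_all
  | cons x l ih =>
    cases N with
    | zero =>
      simpa using sum_nonneg (l := (x :: l).map fun x => max (x - lam) 0) (by simp)
    | succ N =>
      have hx : x ≤ lam + max (x - lam) 0 := by linarith [le_max_left (x - lam) 0]
      have hrest := ih (Nat.le_of_succ_le_succ hN)
      simp only [take_succ_cons, sum_cons, map_cons, Nat.cast_succ]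
      linarith

theorem sum_take_eq_mul_add_sum_max_sub (l : List ℝ) {N : ℕ} (hN : N ≤ l.length) {lam : ℝ}
    (hge : ∀ x ∈ l.take N, lam ≤ x) (hle : ∀ x ∈ l.drop N, x ≤ lam) :
    (l.take N).sum = N * lam + (l.map fun x => max (x - lam) 0).sum := by
  induction l generalizing N with
  | nil => simp_all
  | cons x l ih =>
    cases N with
    | zero =>
      have hzero : ∀ y ∈ x :: l, max (y - lam) 0 = 0 := fun y hy =>
        max_eq_right (sub_nonpos.2 (hle y hy))
      simp [map_congr_left hzero]
    | succ N =>
      have hx : max (x - lam) 0 = x - lam := max_eq_left (sub_nonneg.2 (hge x (by simp)))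
      have hrest := ih (Nat.le_of_succ_le_succ hN) (fun y hy => hge y (by simp [hy]))
        (fun y hy => hle y (by simpa using hy))
      simp only [take_succ_cons, sum_cons, map_cons, Nat.cast_succ, hx]
      linarith

variable {α : Type*} [Preorder α] {l : List α}

theorem SortedGE.getElem_le_of_mem_take_succ (hl : l.SortedGE) {i : ℕ} (hi : i < l.length)
    {x : α} (hx : x ∈ l.take (i + 1)) : l[i] ≤ x := by
  obtain ⟨j, hj, rfl⟩ := mem_take_iff_getElem.1 hx
  exact hl.getElem_ge_getElem_of_le (by omega)

theorem SortedGE.le_getElem_of_mem_drop_succ (hl : l.SortedGE) {i : ℕ} (hi : i < l.length)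
    {x : α} (hx : x ∈ l.drop (i + 1)) : x ≤ l[i] := by
  obtain ⟨j, hj, rfl⟩ := mem_drop_iff_getElem.1 hx
  exact hl.getElem_ge_getElem_of_le (by omega)

end List

theorem Fin.sum_comp_eq_sum_map_of_perm {α M : Type*} [AddCommMonoid M] {n : ℕ}
    {u : Fin n → α} {l : List α} (h : l.Perm (List.ofFn u)) (f : α → M) :
    ∑ i, f (u i) = (l.map f).sum := by
  rw [(h.map f).sum_eq, List.map_ofFn, List.sum_ofFn, Function.comp_def]

/-- For every `u ∈ ℝ^n` and `1 ≤ N ≤ n`, the sum-largest function has the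
LP representation `ψ(u, N) = min_{λ ∈ ℝ} ( Nλ + Σ_i max(u_i − λ, 0) )`, the minimum
being attained, in particular at `λ` equal to the `N`-th largest entry of `u`. -/
theorem sumLargest_lp_representation
    (n N : ℕ) (hN1 : 1 ≤ N) (hNn : N ≤ n) (u : Fin n → ℝ) :
    IsLeast {y : ℝ | ∃ lam : ℝ, y = N * lam + ∑ i, max (u i - lam) 0}
        (sumLargest u N) ∧
      sumLargest u N =
        N * nthLargest u N + ∑ i, max (u i - nthLargest u N) 0 := by
  set s := (List.ofFn u).insertionSort (· ≥ ·)
  have hperm : s.Perm (List.ofFn u) := List.perm_insertionSort _ _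
  have hsorted : s.SortedGE := List.sortedGE_insertionSort
  have hlen : N ≤ s.length := by rwa [hperm.length_eq, List.length_ofFn]
  have hobjective (lam : ℝ) : ∑ i, max (u i - lam) 0 = (s.map fun x => max (x - lam) 0).sum :=
    Fin.sum_comp_eq_sum_map_of_perm hperm fun x => max (x - lam) 0
  obtain ⟨M, rfl⟩ : ∃ M, N = M + 1 := ⟨N - 1, by omega⟩
  have hM : M < s.length := hlen
  have hnth : nthLargest u (M + 1) = s[M] := List.getD_eq_getElem _ _ hM
  have hopt : sumLargest u (M + 1) = (M + 1 : ℕ) * s[M] + ∑ i, max (u i - s[M]) 0 := by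
    rw [hobjective]
    exact s.sum_take_eq_mul_add_sum_max_sub hlen (fun _ => hsorted.getElem_le_of_mem_take_succ hM)
      (fun _ => hsorted.le_getElem_of_mem_drop_succ hM)
  refine ⟨⟨⟨s[M], hopt⟩, ?_⟩, hnth ▸ hopt⟩
  rintro _ ⟨lam, rfl⟩
  rw [hobjective]
  exact s.sum_take_le_mul_add_sum_max_sub hlen lam
end

section
/- The continuous relaxation of the prescient problem is convex: the set of tuples (p, c, d, q, s) with (p, c, d, q) a feasible schedule, s ∈ ℝ^{L×K} with 0 ≤ s_{lk} ≤ 1 and Σ_{l=1}^L s_{lk} = 1 for each month k, and ψ(m_k, N)/N ≤ Σ_{l=1}^L T_l s_{lk} for each month k (where m_k is the vector of daily maximum grid powers of p in month k), is a convex subset of ℝ^{T−1} × ℝ^{T−1} × ℝ^{T−1} × ℝ^T × ℝ^{L×K}. -/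
/-- A feasible power schedule `(p, c, d, q)` for a home energy system with
`Tm = T − 1` time periods: power balance, storage dynamics, boundary charge
conditions `q_1 = q_T = Q/2`, and box constraints on charge, grid power, and
charging/discharging rates. -/
def FeasibleSchedule (Tm : ℕ) (l : Fin Tm → ℝ) (P Q C D ηs ηc ηd h : ℝ)
    (p c d : Fin Tm → ℝ) (q : Fin (Tm + 1) → ℝ) : Prop :=
  (∀ t, p t + d t - l t - c t = 0) ∧
  (∀ t : Fin Tm, q t.succ = ηs * q t.castSucc + h * (ηc * c t - (1 / ηd) * d t)) ∧
  q 0 = Q / 2 ∧ q (Fin.last Tm) = Q / 2 ∧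
  (∀ t, 0 ≤ q t ∧ q t ≤ Q) ∧
  (∀ t, 0 ≤ p t ∧ p t ≤ P) ∧
  (∀ t, 0 ≤ c t ∧ c t ≤ C) ∧
  (∀ t, 0 ≤ d t ∧ d t ≤ D)

/-!
The sum of the `N` largest entries, `ψ(u, N)`, is the sum of `u` over the index set `T` of the
`N` largest entries, and every other index set of that size has a smaller sum (exchange the
elements outside `T` for those of `T`). So `ψ(·, N)` is a maximum of linear functions: it is convex
and monotone. A daily maximum is a convex function of `p`, hence so is `ψ(m_k(p), N) / N`, and the
peak constraint bounds it by a linear function of `s`. All other constraints are linear equations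
or boxes.
-/

open Finset

theorem Finset.sum_le_sum_of_card_eq_of_forall_le {ι M : Type*} [DecidableEq ι]
    [AddCommMonoid M] [LinearOrder M] [IsOrderedAddMonoid M] {u : ι → M} {S T : Finset ι}
    (hcard : #S = #T) (hT : ∀ i ∈ T, ∀ j ∉ T, u j ≤ u i) :
    ∑ j ∈ S, u j ≤ ∑ i ∈ T, u i := by
  have hcard' : #(S \ T) = #(T \ S) := card_sdiff_comm hcard
  suffices ∑ j ∈ S \ T, u j ≤ ∑ i ∈ T \ S, u i by
    rw [← sum_inter_add_sum_sdiff S T, ← sum_inter_add_sum_sdiff T S, inter_comm]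
    exact add_le_add_right this _
  obtain hTS | ⟨i₀, hi₀⟩ := (T \ S).eq_empty_or_nonempty
  · rw [hTS, card_empty, card_eq_zero] at hcard'
    simp [hTS, hcard']
  · calc ∑ j ∈ S \ T, u j ≤ #(S \ T) • (T \ S).inf' ⟨i₀, hi₀⟩ u :=
          sum_le_card_nsmul _ _ _ fun j hj =>
            le_inf' _ _ fun i hi => hT i (mem_sdiff.1 hi).1 j (mem_sdiff.1 hj).2
      _ = #(T \ S) • (T \ S).inf' ⟨i₀, hi₀⟩ u := by rw [hcard']
      _ ≤ ∑ i ∈ T \ S, u i := card_nsmul_le_sum _ _ _ fun i hi => inf'_le _ hi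

theorem exists_finset_sumLargest_eq_sum {n : ℕ} (u : Fin n → ℝ) (N : ℕ) :
    ∃ T : Finset (Fin n), #T = min N n ∧ (∀ i ∈ T, ∀ j ∉ T, u j ≤ u i) ∧
      sumLargest u N = ∑ i ∈ T, u i := by
  set w := (List.ofFn u).insertionSort (· ≥ ·)
  have hperm : w.Perm ((List.finRange n).map u) := by
    rw [← List.ofFn_eq_map]; exact List.perm_insertionSort _ _
  obtain ⟨L, hwL, hL⟩ : ∃ L : List (Fin n), w = L.map u ∧ L.Perm (List.finRange n) :=
    (congrFun₂ (List.eq_map_comp_perm u) w _).mpr hperm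
  have hnodup : L.Nodup := hL.nodup_iff.2 (List.nodup_finRange n)
  have hsorted : (L.take N ++ L.drop N).Pairwise (fun i j => u j ≤ u i) := by
    rw [List.take_append_drop, ← List.pairwise_map (R := (· ≥ ·)), ← hwL]
    exact List.pairwise_insertionSort _ _
  refine ⟨(L.take N).toFinset, ?_, fun i hi j hj => ?_, ?_⟩
  · rw [List.toFinset_card_of_nodup (hnodup.sublist (List.take_sublist _ _)), List.length_take,
      hL.length_eq, List.length_finRange]
  · have hjL : j ∈ L.take N ++ L.drop N := by
      rw [List.take_append_drop]; exact hL.mem_iff.2 (List.mem_finRange j)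
    have hjdrop : j ∈ L.drop N := (List.mem_append.1 hjL).resolve_left (by simpa using hj)
    exact (List.pairwise_append.1 hsorted).2.2 i (List.mem_toFinset.1 hi) j hjdrop
  · rw [List.sum_toFinset _ (hnodup.sublist (List.take_sublist _ _)), List.map_take, ← hwL]
    rfl

theorem sum_le_sumLargest {n : ℕ} (u : Fin n → ℝ) {N : ℕ} {S : Finset (Fin n)}
    (hS : #S = min N n) : ∑ i ∈ S, u i ≤ sumLargest u N := by
  obtain ⟨T, hT, htop, hsum⟩ := exists_finset_sumLargest_eq_sum u N
  rw [hsum]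
  exact sum_le_sum_of_card_eq_of_forall_le (hS.trans hT.symm) htop

theorem monotone_sumLargest {n : ℕ} (N : ℕ) : Monotone fun u : Fin n → ℝ => sumLargest u N := by
  intro u v huv
  obtain ⟨T, hT, -, hsum⟩ := exists_finset_sumLargest_eq_sum u N
  calc sumLargest u N = ∑ i ∈ T, u i := hsum
    _ ≤ ∑ i ∈ T, v i := sum_le_sum fun i _ => huv i
    _ ≤ sumLargest v N := sum_le_sumLargest v hT

theorem convexOn_sumLargest {n : ℕ} (N : ℕ) :
    ConvexOn ℝ Set.univ fun u : Fin n → ℝ => sumLargest u N := by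
  refine ⟨convex_univ, fun u _ v _ a b ha hb _ => ?_⟩
  obtain ⟨T, hT, -, hsum⟩ := exists_finset_sumLargest_eq_sum (a • u + b • v) N
  calc sumLargest (a • u + b • v) N = a * ∑ i ∈ T, u i + b * ∑ i ∈ T, v i := by
        simp only [hsum, Pi.add_apply, Pi.smul_apply, smul_eq_mul, sum_add_distrib, mul_sum]
    _ ≤ a * sumLargest u N + b * sumLargest v N := by
        gcongr <;> exact sum_le_sumLargest _ hT

theorem ConvexOn.comp_of_monotone {𝕜 E β α : Type*} [Semiring 𝕜] [PartialOrder 𝕜]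
    [AddCommMonoid E] [AddCommMonoid α] [PartialOrder α] [AddCommMonoid β] [PartialOrder β]
    [SMul 𝕜 E] [SMul 𝕜 α] [SMul 𝕜 β] {s : Set E} {f : E → β} {g : β → α}
    (hg : ConvexOn 𝕜 Set.univ g) (hg' : Monotone g) (hf : ConvexOn 𝕜 s f) :
    ConvexOn 𝕜 s (g ∘ f) :=
  ⟨hf.1, fun _ hx _ hy _ _ ha hb hab =>
    (hg' (hf.2 hx hy ha hb hab)).trans (hg.2 trivial trivial ha hb hab)⟩

theorem convexOn_pi {𝕜 E ι β : Type*} [Semiring 𝕜] [PartialOrder 𝕜] [AddCommMonoid E]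
    [AddCommMonoid β] [PartialOrder β] [SMul 𝕜 E] [SMul 𝕜 β] {s : Set E} {f : E → ι → β}
    (hs : Convex 𝕜 s) (hf : ∀ i, ConvexOn 𝕜 s fun x => f x i) : ConvexOn 𝕜 s f :=
  ⟨hs, fun _ hx _ hy _ _ ha hb hab i => (hf i).2 hx hy ha hb hab⟩

theorem Finset.convexOn_sup' {ι : Type*} (s : Finset ι) (hs : s.Nonempty) :
    ConvexOn ℝ Set.univ fun p : ι → ℝ => s.sup' hs p := by
  refine ⟨convex_univ, fun p _ q _ a b ha hb _ => sup'_le _ _ fun t ht => ?_⟩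
  simp only [Pi.add_apply, Pi.smul_apply, smul_eq_mul]
  gcongr <;> exact le_sup' _ ht

theorem convexOn_sumLargest_sup' {ι : Type*} {n : ℕ} (day : Fin n → Finset ι)
    (hday : ∀ j, (day j).Nonempty) (N : ℕ) :
    ConvexOn ℝ Set.univ fun p : ι → ℝ => sumLargest (fun j => (day j).sup' (hday j) p) N / N := by
  simpa only [div_eq_inv_mul, smul_eq_mul, Function.comp_apply] using
    ((convexOn_sumLargest N).comp_of_monotone (monotone_sumLargest N)
      (convexOn_pi convex_univ fun j => (day j).convexOn_sup' (hday j))).smul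
      (inv_nonneg.2 (Nat.cast_nonneg (α := ℝ) N))

theorem convex_feasibleSchedule (Tm : ℕ) (l : Fin Tm → ℝ) (P Q C D ηs ηc ηd h : ℝ) :
    Convex ℝ {x : (Fin Tm → ℝ) × (Fin Tm → ℝ) × (Fin Tm → ℝ) × (Fin (Tm + 1) → ℝ) |
      FeasibleSchedule Tm l P Q C D ηs ηc ηd h x.1 x.2.1 x.2.2.1 x.2.2.2} := by
  rintro ⟨p₁, c₁, d₁, q₁⟩ hF₁ ⟨p₂, c₂, d₂, q₂⟩ hF₂ a b ha hb hab
  simp only [Set.mem_ofPred_eq, FeasibleSchedule, Prod.smul_mk, Prod.mk_add_mk, Pi.add_apply,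
    Pi.smul_apply, smul_eq_mul] at hF₁ hF₂ ⊢
  obtain ⟨hbal₁, hdyn₁, hq0₁, hqT₁, hq₁, hp₁, hc₁, hd₁⟩ := hF₁
  obtain ⟨hbal₂, hdyn₂, hq0₂, hqT₂, hq₂, hp₂, hc₂, hd₂⟩ := hF₂
  have box {lo hi x y : ℝ} (hx : x ∈ Set.Icc lo hi) (hy : y ∈ Set.Icc lo hi) :
      a * x + b * y ∈ Set.Icc lo hi :=
    convex_Icc lo hi hx hy ha hb hab
  refine ⟨fun t => ?_, fun t => ?_, ?_, ?_, fun t => box (hq₁ t) (hq₂ t),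
    fun t => box (hp₁ t) (hp₂ t), fun t => box (hc₁ t) (hc₂ t), fun t => box (hd₁ t) (hd₂ t)⟩
  · linear_combination a * hbal₁ t + b * hbal₂ t + l t * hab
  · linear_combination a * hdyn₁ t + b * hdyn₂ t
  · linear_combination a * hq0₁ + b * hq0₂ + Q / 2 * hab
  · linear_combination a * hqT₁ + b * hqT₂ + Q / 2 * hab

theorem prescient_relaxation_convex_general
    (Tm : ℕ) (l : Fin Tm → ℝ)
    (P Q C D : ℝ)
    (ηs ηc ηd : ℝ) (h : ℝ)
    (K : ℕ) (nk : Fin K → ℕ)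
    (day : (k : Fin K) → Fin (nk k) → Finset (Fin Tm))
    (hday : ∀ k j, (day k j).Nonempty)
    (N : ℕ)
    (L : ℕ) (Thr : Fin L → ℝ) :
    Convex ℝ
      {x : (Fin Tm → ℝ) × (Fin Tm → ℝ) × (Fin Tm → ℝ) × (Fin (Tm + 1) → ℝ) ×
          (Fin L → Fin K → ℝ) |
        FeasibleSchedule Tm l P Q C D ηs ηc ηd h x.1 x.2.1 x.2.2.1 x.2.2.2.1 ∧
        (∀ lt k, 0 ≤ x.2.2.2.2 lt k ∧ x.2.2.2.2 lt k ≤ 1) ∧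
        (∀ k, (∑ lt, x.2.2.2.2 lt k) = 1) ∧
        (∀ k, sumLargest (fun j => (day k j).sup' (hday k j) x.1) N / N ≤
          ∑ lt, Thr lt * x.2.2.2.2 lt k)} := by
  rintro ⟨p₁, c₁, d₁, q₁, s₁⟩ ⟨hF₁, hs₁, hsum₁, hψ₁⟩ ⟨p₂, c₂, d₂, q₂, s₂⟩ ⟨hF₂, hs₂, hsum₂, hψ₂⟩
    a b ha hb hab
  have hF := convex_feasibleSchedule Tm l P Q C D ηs ηc ηd h
    (x := (p₁, c₁, d₁, q₁)) hF₁ (y := (p₂, c₂, d₂, q₂)) hF₂ ha hb hab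
  refine ⟨hF, fun lt k => convex_Icc 0 1 (hs₁ lt k) (hs₂ lt k) ha hb hab, fun k => ?_, fun k => ?_⟩
  · simp [sum_add_distrib, ← mul_sum, hsum₁ k, hsum₂ k, hab]
  · refine ((convexOn_sumLargest_sup' (day k) (hday k) N).2
      (Set.mem_univ p₁) (Set.mem_univ p₂) ha hb hab).trans ?_
    calc _ ≤ a * ∑ lt, Thr lt * s₁ lt k + b * ∑ lt, Thr lt * s₂ lt k :=
          add_le_add (mul_le_mul_of_nonneg_left (hψ₁ k) ha) (mul_le_mul_of_nonneg_left (hψ₂ k) hb)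
      _ = _ := by simp [mul_sum, ← sum_add_distrib, mul_add, mul_left_comm]

/-- The continuous relaxation of the prescient problem is convex:
the set of tuples `(p, c, d, q, s)` with `(p, c, d, q)` a feasible schedule,
`0 ≤ s_{lk} ≤ 1` with `Σ_l s_{lk} = 1` for each month `k`, and
`ψ(m_k, N)/N ≤ Σ_l T_l s_{lk}` for each month `k` (where `m_k` is the vector of
daily maximum grid powers of `p` in month `k`), is convex. -/
theorem prescient_relaxation_convex
    (Tm : ℕ) (hTm : 1 ≤ Tm) (l : Fin Tm → ℝ)
    (P Q C D : ℝ) (hP : 0 < P) (hQ : 0 < Q) (hC : 0 < C) (hD : 0 < D)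
    (ηs ηc ηd : ℝ) (hηs : ηs ∈ Set.Ioo (0 : ℝ) 1) (hηc : ηc ∈ Set.Ioo (0 : ℝ) 1)
    (hηd : ηd ∈ Set.Ioo (0 : ℝ) 1) (h : ℝ) (hh : 0 < h)
    (K : ℕ) (nk : Fin K → ℕ)
    (day : (k : Fin K) → Fin (nk k) → Finset (Fin Tm))
    (hday : ∀ k j, (day k j).Nonempty)
    (hpart : ∀ t : Fin Tm, ∃! kj : Σ k : Fin K, Fin (nk k), t ∈ day kj.1 kj.2)
    (N : ℕ) (hN1 : 1 ≤ N) (hN : ∀ k, N ≤ nk k)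
    (L : ℕ) (hL : 0 < L) (Thr : Fin L → ℝ)
    (hT0 : 0 < Thr ⟨0, hL⟩) (hTmono : StrictMono Thr) :
    Convex ℝ
      {x : (Fin Tm → ℝ) × (Fin Tm → ℝ) × (Fin Tm → ℝ) × (Fin (Tm + 1) → ℝ) ×
          (Fin L → Fin K → ℝ) |
        FeasibleSchedule Tm l P Q C D ηs ηc ηd h x.1 x.2.1 x.2.2.1 x.2.2.2.1 ∧
        (∀ lt k, 0 ≤ x.2.2.2.2 lt k ∧ x.2.2.2.2 lt k ≤ 1) ∧
        (∀ k, (∑ lt, x.2.2.2.2 lt k) = 1) ∧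
        (∀ k, sumLargest (fun j => (day k j).sup' (hday k j) x.1) N / N ≤
          ∑ lt, Thr lt * x.2.2.2.2 lt k)} :=
  prescient_relaxation_convex_general Tm l P Q C D ηs ηc ηd h K nk day hday N L Thr
end

section
/- Assume there exists at least one feasible schedule (p, c, d, q) with z_k ≤ T_L for all months k. Then the optimal value of the prescient mixed-integer problem — minimizing h Σ_{t=1}^{T−1} λ_t p_t + Σ_{k=1}^K Σ_{l=1}^L β_l s_{lk} over feasible schedules (p,c,d,q) and binary s ∈ {0,1}^{L×K} with Σ_{l=1}^L s_{lk} = 1 and z_k ≤ Σ_{l=1}^L T_l s_{lk} for each k — equals the infimum over feasible schedules with z_k ≤ T_L for all k of the true total cost h Σ_{t=1}^{T−1} λ_t p_t + Σ_{k=1}^K φ(z_k). -/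
/-!
For a fixed schedule, the binary variables `s` select one tier per month, and the constraint
`z_k ≤ Σ_l T_l s_lk` says that the selected threshold lies above `z_k`. Since the charges increase
with the tier, the cheapest admissible choice is the lowest tier whose threshold lies above `z_k`,
and its charge is exactly `φ(z_k)`. Hence every MILP value is bounded below by a true cost of the
same schedule, and every true cost is itself a MILP value, so the two infima agree.
-/

open Finset

lemma sumLargest_nonneg {n : ℕ} {u : Fin n → ℝ} (hu : ∀ i, 0 ≤ u i) (N : ℕ) :
    0 ≤ sumLargest u N := by
  refine List.sum_nonneg fun x hx => ?_
  obtain ⟨i, rfl⟩ := List.mem_ofFn.1 <|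
    (List.perm_insertionSort _ _).mem_iff.1 (List.mem_of_mem_take hx)
  exact hu i

lemma exists_eq_pi_single_of_sum_eq_one {ι R : Type*} [Fintype ι] [DecidableEq ι]
    [AddCommMonoidWithOne R] [CharZero R] {s : ι → R} (h01 : ∀ i, s i = 0 ∨ s i = 1)
    (hsum : ∑ i, s i = 1) : ∃ j, s = Pi.single j 1 := by
  classical
  have hs : s = fun i => if s i = 1 then 1 else 0 := by
    funext i
    rcases h01 i with hi | hi <;> simp [hi]
  have hcard : #{i | s i = 1} = 1 := by
    rw [hs, Finset.sum_boole] at hsum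
    exact_mod_cast hsum
  obtain ⟨j, hj⟩ := Finset.card_eq_one.1 hcard
  refine ⟨j, funext fun i => ?_⟩
  have hij : s i = 1 ↔ i = j := by simpa using Finset.ext_iff.1 hj i
  rcases h01 i with hi | hi
  · rw [hi, Pi.single_apply, if_neg fun hij' => zero_ne_one (hi ▸ hij.2 hij')]
  · rw [hi, hij.1 hi, Pi.single_eq_same]

lemma sum_mul_pi_single_one {ι R : Type*} [Fintype ι] [DecidableEq ι] [NonAssocSemiring R]
    (a : ι → R) (j : ι) : ∑ i, a i * (Pi.single j 1 : ι → R) i = a j := by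
  simp [Pi.single_apply]

lemma FeasibleSchedule.grid_nonneg {Tm : ℕ} {l : Fin Tm → ℝ} {P Q C D ηs ηc ηd h : ℝ}
    {p c d : Fin Tm → ℝ} {q : Fin (Tm + 1) → ℝ}
    (hs : FeasibleSchedule Tm l P Q C D ηs ηc ηd h p c d q) (t : Fin Tm) : 0 ≤ p t :=
  (hs.2.2.2.2.2.1 t).1

lemma sumLargest_sup'_div_nonneg {n m : ℕ} (days : Fin m → Finset (Fin n))
    (hdays : ∀ j, (days j).Nonempty) {p : Fin n → ℝ} (hp : ∀ t, 0 ≤ p t) (N : ℕ) :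
    0 ≤ sumLargest (fun j => (days j).sup' (hdays j) p) N / N := by
  refine div_nonneg (sumLargest_nonneg (fun j => ?_) N) N.cast_nonneg
  obtain ⟨t, ht⟩ := hdays j
  exact (hp t).trans (le_sup' p ht)

section TierCharge

variable {L : ℕ} (hL : 0 < L) {β Thr : Fin L → ℝ} {φ : ℝ → ℝ}

lemma tierCharge_eq_of_minimal
    (hφ0 : ∀ z : ℝ, 0 ≤ z → z ≤ Thr ⟨0, hL⟩ → φ z = β ⟨0, hL⟩)
    (hφj : ∀ (j : ℕ) (hj : j + 1 < L), ∀ z : ℝ,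
      Thr ⟨j, Nat.lt_of_succ_lt hj⟩ < z → z ≤ Thr ⟨j + 1, hj⟩ → φ z = β ⟨j + 1, hj⟩)
    {z : ℝ} (hz : 0 ≤ z) {j : Fin L} (hj : Minimal (fun i => z ≤ Thr i) j) : φ z = β j := by
  obtain ⟨_ | i, hi⟩ := j
  · exact hφ0 z hz hj.prop
  · have hbelow : Thr ⟨i, Nat.lt_of_succ_lt hi⟩ < z :=
      lt_of_not_ge (hj.not_prop_of_lt (Fin.mk_lt_mk.2 i.lt_succ_self))
    exact hφj i hi z hbelow hj.prop

lemma tierCharge_le_of_le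
    (hφ0 : ∀ z : ℝ, 0 ≤ z → z ≤ Thr ⟨0, hL⟩ → φ z = β ⟨0, hL⟩)
    (hφj : ∀ (j : ℕ) (hj : j + 1 < L), ∀ z : ℝ,
      Thr ⟨j, Nat.lt_of_succ_lt hj⟩ < z → z ≤ Thr ⟨j + 1, hj⟩ → φ z = β ⟨j + 1, hj⟩)
    (hβ : Monotone β) {z : ℝ} (hz : 0 ≤ z) {j : Fin L} (hzj : z ≤ Thr j) : φ z ≤ β j := by
  obtain ⟨i, hij, hi⟩ := exists_minimal_le_of_wellFoundedLT (fun i => z ≤ Thr i) j hzj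
  rw [tierCharge_eq_of_minimal hL hφ0 hφj hz hi]
  exact hβ hij

end TierCharge

/-- If there exists a feasible schedule with `z_k ≤ T_L` for all months
`k`, then the optimal value of the prescient mixed-integer problem (with one-hot tier
selection variables `s`) equals the infimum over feasible schedules with `z_k ≤ T_L`
for all `k` of the true total cost `h Σ_t λ_t p_t + Σ_k φ(z_k)`. -/
theorem prescient_milp_value_eq_true_cost_inf
    (Tm : ℕ) (l lam : Fin Tm → ℝ)
    (P Q C D : ℝ)
    (ηs ηc ηd : ℝ) (h : ℝ)
    (K : ℕ) (nk : Fin K → ℕ)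
    (day : (k : Fin K) → Fin (nk k) → Finset (Fin Tm))
    (hday : ∀ k j, (day k j).Nonempty)
    (N : ℕ)
    (L : ℕ) (hL : 0 < L) (β Thr : Fin L → ℝ)
    (hβmono : StrictMono β)
    (hTmono : StrictMono Thr)
    (φ : ℝ → ℝ)
    (hφ0 : ∀ z : ℝ, 0 ≤ z → z ≤ Thr ⟨0, hL⟩ → φ z = β ⟨0, hL⟩)
    (hφj : ∀ (j : ℕ) (hj : j + 1 < L), ∀ z : ℝ,
      Thr ⟨j, by omega⟩ < z → z ≤ Thr ⟨j + 1, hj⟩ → φ z = β ⟨j + 1, hj⟩)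
    -- the monthly peak usage `z_k` of a grid power profile `p`
    (z : (Fin Tm → ℝ) → Fin K → ℝ)
    (hz : ∀ p k, z p k = sumLargest (fun j => (day k j).sup' (hday k j) p) N / N) :
    sInf {y : ℝ | ∃ (p c d : Fin Tm → ℝ) (q : Fin (Tm + 1) → ℝ) (s : Fin L → Fin K → ℝ),
        FeasibleSchedule Tm l P Q C D ηs ηc ηd h p c d q ∧
        (∀ lt k, s lt k = 0 ∨ s lt k = 1) ∧
        (∀ k, (∑ lt, s lt k) = 1) ∧
        (∀ k, z p k ≤ ∑ lt, Thr lt * s lt k) ∧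
        y = h * ∑ t, lam t * p t + ∑ k, ∑ lt, β lt * s lt k} =
      sInf {y : ℝ | ∃ (p c d : Fin Tm → ℝ) (q : Fin (Tm + 1) → ℝ),
        FeasibleSchedule Tm l P Q C D ηs ηc ηd h p c d q ∧
        (∀ k, z p k ≤ Thr ⟨L - 1, by omega⟩) ∧
        y = h * ∑ t, lam t * p t + ∑ k, φ (z p k)} := by
  have hz_nonneg : ∀ p, (∀ t, 0 ≤ p t) → ∀ k, 0 ≤ z p k := fun p hp k =>
    hz p k ▸ sumLargest_sup'_div_nonneg (day k) (hday k) hp N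
  -- mutual domination fixes `sInf` even for empty or unbounded sets, where it is the junk value `0`
  apply csInf_eq_csInf_of_forall_exists_le
  · rintro _ ⟨p, c, d, q, s, hfeas, h01, hsum, hzs, rfl⟩
    have hzp := hz_nonneg p hfeas.grid_nonneg
    choose j hj using fun k =>
      exists_eq_pi_single_of_sum_eq_one (fun lt => h01 lt k) (hsum k)
    have hsel : ∀ (a : Fin L → ℝ) k, ∑ lt, a lt * s lt k = a (j k) := fun a k => by
      rw [← sum_mul_pi_single_one a (j k), ← hj k]
    have hzj : ∀ k, z p k ≤ Thr (j k) := fun k => hsel Thr k ▸ hzs k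
    refine ⟨_, ⟨p, c, d, q, hfeas,
      fun k => (hzj k).trans (hTmono.monotone (Fin.mk_le_mk.2 (by omega))), rfl⟩, ?_⟩
    gcongr with k
    rw [hsel]
    exact tierCharge_le_of_le hL hφ0 hφj hβmono.monotone (hzp k) (hzj k)
  · rintro _ ⟨p, c, d, q, hfeas, hzL, rfl⟩
    have hzp := hz_nonneg p hfeas.grid_nonneg
    choose j hj using fun k => exists_minimal_of_wellFoundedLT (fun i => z p k ≤ Thr i) ⟨_, hzL k⟩
    refine ⟨_, ⟨p, c, d, q, fun lt k => (Pi.single (j k) 1 : Fin L → ℝ) lt, hfeas,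
      ?_, ?_, ?_, rfl⟩, ?_⟩
    · intro lt k
      by_cases hlt : lt = j k <;> simp [hlt]
    · simp
    · intro k
      simpa [sum_mul_pi_single_one] using (hj k).prop
    · gcongr with k
      rw [sum_mul_pi_single_one]
      exact (tierCharge_eq_of_minimal hL hφ0 hφj (hzp k) (hj k)).ge
end

section
/- The epigraph of the sum-largest function has a linear-programming description: for u ∈ ℝ^n, t ∈ ℝ, and an integer N with 1 ≤ N ≤ n, one has ψ(u, N) ≤ t if and only if there exist λ ∈ ℝ and s ∈ ℝ^n with s_i ≥ 0 and s_i ≥ u_i − λ for all i, such that N λ + Σ_{i=1}^n s_i ≤ t. -/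
namespace List

section Preorder

variable {α : Type*} [Preorder α] {l : List α} {m : ℕ}

theorem Pairwise.getElem_le_of_mem_take (hl : l.Pairwise (· ≥ ·)) (hm : m < l.length) {x : α}
    (hx : x ∈ l.take (m + 1)) : l[m] ≤ x := by
  have hsorted := hl.sublist (take_sublist (m + 1) l)
  rw [take_add_one, getElem?_eq_getElem hm, Option.toList_some, pairwise_append] at hsorted
  rw [take_add_one, getElem?_eq_getElem hm, Option.toList_some, mem_append, mem_singleton] at hx
  rcases hx with hx | rfl
  · exact hsorted.2.2 x hx _ (mem_singleton_self _)
  · exact le_rfl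

theorem Pairwise.le_getElem_of_mem_drop (hl : l.Pairwise (· ≥ ·)) (hm : m < l.length) {x : α}
    (hx : x ∈ l.drop (m + 1)) : x ≤ l[m] := by
  have hsorted := hl.sublist (drop_sublist m l)
  rw [drop_eq_getElem_cons hm, pairwise_cons] at hsorted
  exact hsorted.1 x hx

end Preorder

variable {α : Type*} [AddCommGroup α] [LinearOrder α] [IsOrderedAddMonoid α]

theorem sum_le_length_nsmul_add_sum_posPart (l : List α) (c : α) :
    l.sum ≤ l.length • c + (l.map fun x => (x - c)⁺).sum := by
  calc l.sum = (l.map fun x => x).sum := by rw [map_id']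
    _ ≤ (l.map fun x => c + (x - c)⁺).sum :=
        sum_le_sum fun x _ => by rw [← sup_eq_add_posPart_sub]; exact le_sup_left
    _ = l.length • c + (l.map fun x => (x - c)⁺).sum := by
        rw [sum_map_add, map_const', sum_replicate]

theorem sum_eq_length_nsmul_add_sum_posPart {l : List α} {c : α} (hl : ∀ x ∈ l, c ≤ x) :
    l.sum = l.length • c + (l.map fun x => (x - c)⁺).sum := by
  calc l.sum = (l.map fun x => x).sum := by rw [map_id']
    _ = (l.map fun x => c + (x - c)⁺).sum :=
        congrArg sum <| map_congr_left fun x hx => by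
          rw [← sup_eq_add_posPart_sub, sup_eq_left.2 (hl x hx)]
    _ = l.length • c + (l.map fun x => (x - c)⁺).sum := by
        rw [sum_map_add, map_const', sum_replicate]

theorem sum_take_le_nsmul_add_sum_posPart {l : List α} {N : ℕ} (hN : N ≤ l.length) (c : α) :
    (l.take N).sum ≤ N • c + (l.map fun x => (x - c)⁺).sum := by
  calc (l.take N).sum ≤ N • c + ((l.take N).map fun x => (x - c)⁺).sum := by
        simpa [hN] using sum_le_length_nsmul_add_sum_posPart (l.take N) c
    _ ≤ N • c + (l.map fun x => (x - c)⁺).sum := by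
        gcongr
        exact ((take_sublist N l).map _).sum_le_sum (by simp [posPart_nonneg])

theorem Pairwise.sum_take_eq_nsmul_add_sum_posPart {l : List α} (hl : l.Pairwise (· ≥ ·))
    {m : ℕ} (hm : m < l.length) :
    (l.take (m + 1)).sum = (m + 1) • l[m] + (l.map fun x => (x - l[m])⁺).sum := by
  have hdrop : ((l.drop (m + 1)).map fun x => (x - l[m])⁺).sum = 0 :=
    sum_eq_zero fun y hy => by
      obtain ⟨x, hx, rfl⟩ := mem_map.1 hy
      exact posPart_eq_zero.2 (sub_nonpos.2 (hl.le_getElem_of_mem_drop hm hx))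
  rw [sum_eq_length_nsmul_add_sum_posPart fun x hx => hl.getElem_le_of_mem_take hm hx,
    length_take_of_le hm, ← sum_take_add_sum_drop (l.map _) (m + 1), ← map_take, ← map_drop,
    hdrop, add_zero]

end List

section SumLargest

variable {n : ℕ} (u : Fin n → ℝ)

theorem sum_map_insertionSort_ofFn (f : ℝ → ℝ) :
    (((List.ofFn u).insertionSort (· ≥ ·)).map f).sum = ∑ i, f (u i) := by
  rw [((List.perm_insertionSort _ _).map f).sum_eq, List.map_ofFn, List.sum_ofFn]
  rfl

theorem sumLargest_le_mul_add_sum_posPart {N : ℕ} (hN : N ≤ n) (c : ℝ) :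
    sumLargest u N ≤ N * c + ∑ i, (u i - c)⁺ := by
  have := List.sum_take_le_nsmul_add_sum_posPart (l := (List.ofFn u).insertionSort (· ≥ ·))
    (by simpa using hN) c
  rwa [nsmul_eq_mul, sum_map_insertionSort_ofFn] at this

theorem exists_sumLargest_eq_mul_add_sum_posPart {N : ℕ} (hN1 : 1 ≤ N) (hNn : N ≤ n) :
    ∃ c, sumLargest u N = N * c + ∑ i, (u i - c)⁺ := by
  obtain ⟨m, rfl⟩ := Nat.exists_eq_add_of_le' hN1
  set S := (List.ofFn u).insertionSort (· ≥ ·)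
  have hm : m < S.length := by simpa [S] using hNn
  refine ⟨S[m], ?_⟩
  have h := (List.pairwise_insertionSort _ _).sum_take_eq_nsmul_add_sum_posPart hm
  rw [nsmul_eq_mul, sum_map_insertionSort_ofFn] at h
  exact_mod_cast h

end SumLargest

/-- The epigraph of the sum-largest function has an LP description:
for `u ∈ ℝ^n`, `t ∈ ℝ`, and `1 ≤ N ≤ n`, one has `ψ(u, N) ≤ t` iff there exist
`λ ∈ ℝ` and `s ∈ ℝ^n` with `s_i ≥ 0` and `s_i ≥ u_i − λ` for all `i`, such that
`Nλ + Σ_i s_i ≤ t`. -/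
theorem sumLargest_epigraph_lp
    (n N : ℕ) (hN1 : 1 ≤ N) (hNn : N ≤ n) (u : Fin n → ℝ) (t : ℝ) :
    sumLargest u N ≤ t ↔
      ∃ (lam : ℝ) (s : Fin n → ℝ),
        (∀ i, 0 ≤ s i ∧ u i - lam ≤ s i) ∧
        N * lam + ∑ i, s i ≤ t := by
  constructor
  · intro ht
    obtain ⟨c, hc⟩ := exists_sumLargest_eq_mul_add_sum_posPart u hN1 hNn
    exact ⟨c, fun i => (u i - c)⁺, fun i => ⟨posPart_nonneg _, le_posPart _⟩, hc ▸ ht⟩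
  · rintro ⟨lam, s, hs, hlam⟩
    calc sumLargest u N ≤ N * lam + ∑ i, (u i - lam)⁺ :=
          sumLargest_le_mul_add_sum_posPart u hNn lam
      _ ≤ N * lam + ∑ i, s i := by
          gcongr with i
          exact sup_le (hs i).2 (hs i).1
      _ ≤ t := hlam
end
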